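/- Let K be a perfectoid analytic field. Then the norm groups of K and of its tilt K' coincide: |K^×| = |(K')^×|. -/

import Mathlib

/-!
The tilt norm of `x̄ = (x̄ₙ)` is `|xₙ|^(pⁿ)` for any lift `xₙ` of `x̄ₙ` with `|xₙ| > |p|`.
Hence every `|x̄|'` is the norm `|xₙ^(pⁿ)|` of an element of `K`, and the norm is
multiplicative: at a level `n` so deep that `|p|^(pⁿ) < |ā|'|b̄|'`, the product of lifts of
`āₙ` and `b̄ₙ` still has norm `> |p|`, so it is an admissible lift of `(āb̄)ₙ`.
Conversely, surjectivity of Frobenius on `o_K/(p)` extends any `x ∈ o_K` with `|x| > |p|`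
to an element of the tilt of norm `|x|`. Since `K` is not discretely valued there is a `t`
with `|p| < |t| < 1`, and any `x` with `|x| ≤ 1` factors as `(x / tᵐ) · tᵐ` with
`|t| < |x / tᵐ| ≤ 1`; so all of `|Kˣ|` is reached through multiplicativity.
-/

open scoped NNReal

set_option synthInstance.maxHeartbeats 1000000
set_option maxHeartbeats 1000000

/-- The valuation ring `o_K` of an analytic field `K` (a field complete with respect to a
multiplicative nonarchimedean norm, given by a rank-one valuation). -/
noncomputable abbrev OK (K : Type*) [Field K] [Valued K ℝ≥0] : Subring K :=
  Valued.v.integer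

/-- `o_K/(p)`. -/
abbrev OKmodp (p : ℕ) (K : Type*) [Field K] [Valued K ℝ≥0] : Type _ :=
  OK K ⧸ Ideal.span {(p : OK K)}

/-- `K` is discretely valued: the norm group is generated by a single `γ < 1`. -/
def IsDiscretelyValued (K : Type*) [Field K] [Valued K ℝ≥0] : Prop :=
  ∃ γ : ℝ≥0, γ < 1 ∧ ∀ x : K, x ≠ 0 → ∃ n : ℤ, Valued.v x = γ ^ n

theorem charP_OKmodp (p : ℕ) [Fact p.Prime] (K : Type*) [Field K] [Valued K ℝ≥0]
    (hp : Valued.v (p : K) = (p : ℝ≥0)⁻¹) : CharP (OKmodp p K) p := by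
  refine CharP.quotient _ p ?_
  intro hu
  rcases isUnit_iff_exists_inv.mp hu with ⟨u, huu⟩
  have hcast : (((p : OK K) * u : OK K) : K) = (1 : K) := by rw [huu]; rfl
  have hple : ((p : OK K) : K) = (p : K) := by push_cast; ring
  have hu1 : Valued.v ((u : K)) ≤ 1 := u.2
  have h1 : Valued.v ((p : K)) * Valued.v ((u : K)) = 1 := by
    rw [← hple, ← Valued.v.map_mul]
    rw [show ((p : OK K) : K) * ((u : K)) = (((p : OK K) * u : OK K) : K) from rfl, hcast]
    exact Valued.v.map_one
  rw [hp] at h1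
  have hp1 : ((p : ℝ≥0))⁻¹ < 1 := by
    have h2 : (1 : ℝ≥0) < (p : ℝ≥0) := by
      exact_mod_cast Nat.one_lt_cast.mpr (Fact.out : p.Prime).one_lt
    exact inv_lt_one_of_one_lt₀ h2
  have : (p : ℝ≥0)⁻¹ * Valued.v ((u : K)) ≤ (p : ℝ≥0)⁻¹ * 1 := by
    exact mul_le_mul_of_nonneg_left hu1 zero_le
  rw [h1] at this
  simp at this
  exact absurd (lt_of_le_of_lt this hp1) (lt_irrefl _)

/-- The tilt `o_{K'} = lim← o_K/(p)` (inverse limit under Frobenius), realized as a subring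
of the product ring `Π_n o_K/(p)`. -/
noncomputable def TiltRing (p : ℕ) [Fact p.Prime] (K : Type*) [Field K] [Valued K ℝ≥0]
    (hp : Valued.v (p : K) = (p : ℝ≥0)⁻¹) : Subring (∀ _ : ℕ, OKmodp p K) where
  carrier := {x | ∀ n, x (n + 1) ^ p = x n}
  zero_mem' := by
    intro n
    simp only [Pi.zero_apply]
    exact zero_pow (Fact.out : p.Prime).ne_zero
  one_mem' := by intro n; simp
  add_mem' := by
    haveI := charP_OKmodp p K hp
    intro a b ha hb n
    simp only [Pi.add_apply]
    rw [add_pow_char, ha n, hb n]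
  mul_mem' := by
    intro a b ha hb n
    simp only [Pi.mul_apply]
    rw [mul_pow, ha n, hb n]
  neg_mem' := by
    haveI := charP_OKmodp p K hp
    intro a ha n
    simp only [Pi.neg_apply]
    rw [show (-(a (n+1))) = (-1) * a (n+1) by ring, mul_pow, neg_one_pow_char, ha n]
    ring

/-- The defining property of the tilt norm `|x̄|' = |θ(x̄)|`: it vanishes at `0`, and
for `x̄ = (x̄_n)_n` in the tilt, `|x̄|' = |x_n|^(p^n)` for any lift `x_n ∈ o_K` of the
`n`-th component `x̄_n` whose norm exceeds `|p| = p⁻¹`. -/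
def IsTiltNorm (p : ℕ) [Fact p.Prime] (K : Type*) [Field K] [Valued K ℝ≥0]
    (hp : Valued.v (p : K) = (p : ℝ≥0)⁻¹)
    (N : TiltRing p K hp → ℝ≥0) : Prop :=
  N 0 = 0 ∧
  ∀ (x : TiltRing p K hp) (n : ℕ) (xn : OK K),
    Ideal.Quotient.mk (Ideal.span {(p : OK K)}) xn = x.val n →
    (p : ℝ≥0)⁻¹ < Valued.v (xn : K) →
    N x = Valued.v (xn : K) ^ (p ^ n)

lemma one_lt_natCast_prime (p : ℕ) [Fact p.Prime] : 1 < (p : ℝ≥0) := by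
  exact_mod_cast (Fact.out : p.Prime).one_lt

lemma inv_natCast_prime_lt_one (p : ℕ) [Fact p.Prime] : (p : ℝ≥0)⁻¹ < 1 :=
  inv_lt_one_of_one_lt₀ (one_lt_natCast_prime p)

lemma mk_eq_zero_iff_valuation_le {p : ℕ} {K : Type*} [Field K] [Valued K ℝ≥0]
    (hp : Valued.v (p : K) = (p : ℝ≥0)⁻¹) (x : OK K) :
    Ideal.Quotient.mk (Ideal.span {(p : OK K)}) x = 0 ↔ Valued.v (x : K) ≤ (p : ℝ≥0)⁻¹ := by
  rw [Ideal.Quotient.eq_zero_iff_mem, Ideal.mem_span_singleton, ← hp,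
    ← (Valuation.integer.integers Valued.v).le_iff_dvd]
  rfl

lemma exists_valuation_mem_Ioo {p : ℕ} [Fact p.Prime] {K : Type*} [Field K] [Valued K ℝ≥0]
    (hp : Valued.v (p : K) = (p : ℝ≥0)⁻¹)
    (hnd : ¬ IsDiscretelyValued K) : ∃ t : K, (p : ℝ≥0)⁻¹ < Valued.v t ∧ Valued.v t < 1 := by
  by_contra! h
  refine hnd ⟨(p : ℝ≥0)⁻¹, inv_natCast_prime_lt_one p, fun x hx => ?_⟩
  have hp1 := one_lt_natCast_prime p
  have hp0 : (p : ℝ≥0) ≠ 0 := (zero_lt_one.trans hp1).ne'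
  obtain ⟨n, hlt, hle⟩ := exists_mem_Ioc_zpow (Valued.v.pos_iff.2 hx) hp1
  have hpow : 0 < (p : ℝ≥0) ^ (n + 1) := zpow_pos (zero_lt_one.trans hp1) _
  have hscaled : Valued.v (x * (p : K) ^ (n + 1)) = Valued.v x / (p : ℝ≥0) ^ (n + 1) := by
    rw [map_mul, map_zpow₀, hp, inv_zpow, div_eq_mul_inv]
  have hunit : Valued.v (x * (p : K) ^ (n + 1)) = 1 := by
    refine le_antisymm ?_ (h _ ?_)
    · rwa [hscaled, div_le_one hpow]
    · rwa [hscaled, lt_div_iff₀ hpow, zpow_add_one₀ hp0, mul_comm, mul_inv_cancel_right₀ hp0]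
  refine ⟨-(n + 1), ?_⟩
  rw [hscaled, div_eq_one_iff_eq hpow.ne'] at hunit
  rw [hunit, inv_zpow', neg_neg]

namespace TiltRing

variable {p : ℕ} [Fact p.Prime] {K : Type*} [Field K] [Valued K ℝ≥0]
  {hp : Valued.v (p : K) = (p : ℝ≥0)⁻¹}

lemma val_add_pow_pow (a : TiltRing p K hp) (m k : ℕ) : a.val (m + k) ^ p ^ k = a.val m := by
  induction k with
  | zero => simp
  | succ k ih => rw [← add_assoc, pow_succ', pow_mul, a.2, ih]

lemma val_ne_zero_of_le (a : TiltRing p K hp) {m n : ℕ} (hmn : m ≤ n) (hm : a.val m ≠ 0) :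
    a.val n ≠ 0 := by
  obtain ⟨k, rfl⟩ := Nat.exists_eq_add_of_le hmn
  intro h
  rw [← val_add_pow_pow a m k, h, zero_pow (pow_ne_zero _ (Fact.out : p.Prime).ne_zero)] at hm
  exact hm rfl

lemma eventually_val_ne_zero {a : TiltRing p K hp} (ha : a ≠ 0) :
    ∀ᶠ n in Filter.atTop, a.val n ≠ 0 := by
  obtain ⟨m, hm⟩ : ∃ m, a.val m ≠ 0 := by
    by_contra! h
    exact ha (Subtype.ext (funext h))
  exact Filter.eventually_atTop.2 ⟨m, fun n hn => val_ne_zero_of_le a hn hm⟩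

lemma exists_val_zero_eq (hfrob : ∀ a : OKmodp p K, ∃ b, b ^ p = a) (x : OKmodp p K) :
    ∃ a : TiltRing p K hp, a.val 0 = x := by
  choose root hroot using hfrob
  refine ⟨⟨fun n => root^[n] x, fun n => ?_⟩, rfl⟩
  simp only [Function.iterate_succ_apply', hroot]

end TiltRing

namespace IsTiltNorm

open Filter

variable {p : ℕ} [Fact p.Prime] {K : Type*} [Field K] [Valued K ℝ≥0]
  {hp : Valued.v (p : K) = (p : ℝ≥0)⁻¹} {N : TiltRing p K hp → ℝ≥0}

lemma exists_lift (hN : IsTiltNorm p K hp N) (a : TiltRing p K hp) {n : ℕ} (hn : a.val n ≠ 0) :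
    ∃ x : OK K, Ideal.Quotient.mk (Ideal.span {(p : OK K)}) x = a.val n ∧
      (p : ℝ≥0)⁻¹ < Valued.v (x : K) ∧ N a = Valued.v (x : K) ^ p ^ n := by
  obtain ⟨x, hx⟩ := Ideal.Quotient.mk_surjective (a.val n)
  have hv : (p : ℝ≥0)⁻¹ < Valued.v (x : K) := by
    by_contra! hle
    exact hn (hx ▸ (mk_eq_zero_iff_valuation_le hp x).2 hle)
  exact ⟨x, hx, hv, hN.2 a n x hx hv⟩

lemma exists_valuation_eq (hN : IsTiltNorm p K hp N) {a : TiltRing p K hp} (ha : a ≠ 0) :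
    ∃ x : K, x ≠ 0 ∧ Valued.v x = N a := by
  obtain ⟨n, hn⟩ := (TiltRing.eventually_val_ne_zero ha).exists
  obtain ⟨x, -, hx, hNa⟩ := hN.exists_lift a hn
  exact ⟨(x : K) ^ p ^ n, pow_ne_zero _ (Valued.v.ne_zero_iff.1 (ne_bot_of_gt hx)),
    by rw [map_pow, hNa]⟩

lemma apply_eq_zero_iff (hN : IsTiltNorm p K hp N) {a : TiltRing p K hp} : N a = 0 ↔ a = 0 := by
  refine ⟨fun h => ?_, fun h => h ▸ hN.1⟩
  by_contra ha
  obtain ⟨x, hx, hNa⟩ := hN.exists_valuation_eq ha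
  exact Valued.v.ne_zero_iff.2 hx (hNa.trans h)

lemma map_one (hN : IsTiltNorm p K hp N) : N 1 = 1 := by
  simpa using hN.2 1 0 1 (_root_.map_one _) (by simpa using inv_natCast_prime_lt_one p)

lemma map_mul (hN : IsTiltNorm p K hp N) (a b : TiltRing p K hp) : N (a * b) = N a * N b := by
  rcases eq_or_ne a 0 with rfl | ha
  · rw [zero_mul, hN.1, zero_mul]
  rcases eq_or_ne b 0 with rfl | hb
  · rw [mul_zero, hN.1, mul_zero]
  have hpos : 0 < N a * N b :=
    pos_iff_ne_zero.2 (mul_ne_zero (mt hN.apply_eq_zero_iff.1 ha) (mt hN.apply_eq_zero_iff.1 hb))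
  have hsmall : ∀ᶠ n in atTop, (p : ℝ≥0)⁻¹ ^ p ^ n < N a * N b :=
    ((tendsto_pow_atTop_nhds_zero_of_lt_one zero_le (inv_natCast_prime_lt_one p)).comp
      (tendsto_pow_atTop_atTop_of_one_lt (Fact.out : p.Prime).one_lt)).eventually
      (gt_mem_nhds hpos)
  obtain ⟨n, ⟨hna, hnb⟩, hn⟩ :=
    ((TiltRing.eventually_val_ne_zero ha).and (TiltRing.eventually_val_ne_zero hb)).and
      hsmall |>.exists
  obtain ⟨x, hx, -, hNa⟩ := hN.exists_lift a hna
  obtain ⟨y, hy, -, hNb⟩ := hN.exists_lift b hnb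
  have hxy : (p : ℝ≥0)⁻¹ < Valued.v ((x * y : OK K) : K) := by
    rw [MulMemClass.coe_mul, Valued.v.map_mul]
    refine lt_of_pow_lt_pow_left₀ (p ^ n) zero_le ?_
    rwa [mul_pow, ← hNa, ← hNb]
  rw [hN.2 (a * b) n (x * y) (by rw [_root_.map_mul, hx, hy]; rfl) hxy, MulMemClass.coe_mul,
    Valued.v.map_mul, mul_pow, hNa, hNb]

def toMonoidWithZeroHom (hN : IsTiltNorm p K hp N) : TiltRing p K hp →*₀ ℝ≥0 where
  toFun := N
  map_zero' := hN.1
  map_one' := hN.map_one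
  map_mul' := hN.map_mul

lemma map_pow (hN : IsTiltNorm p K hp N) (a : TiltRing p K hp) (m : ℕ) : N (a ^ m) = N a ^ m :=
  _root_.map_pow hN.toMonoidWithZeroHom a m

lemma exists_eq_valuation_of_lt (hN : IsTiltNorm p K hp N)
    (hfrob : ∀ a : OKmodp p K, ∃ b, b ^ p = a) (x : OK K) (hx : (p : ℝ≥0)⁻¹ < Valued.v (x : K)) :
    ∃ a : TiltRing p K hp, a ≠ 0 ∧ N a = Valued.v (x : K) := by
  obtain ⟨a, ha⟩ := TiltRing.exists_val_zero_eq (hp := hp) hfrob (Ideal.Quotient.mk _ x)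
  have hNa : N a = Valued.v (x : K) := by simpa using hN.2 a 0 x ha.symm hx
  refine ⟨a, mt hN.apply_eq_zero_iff.2 ?_, hNa⟩
  rw [hNa]
  exact (pos_of_gt hx).ne'

lemma exists_eq_valuation_of_le_one (hN : IsTiltNorm p K hp N) (hnd : ¬ IsDiscretelyValued K)
    (hfrob : ∀ a : OKmodp p K, ∃ b, b ^ p = a) {x : K} (hx : x ≠ 0)
    (hx1 : Valued.v x ≤ 1) : ∃ a : TiltRing p K hp, a ≠ 0 ∧ N a = Valued.v x := by
  obtain ⟨t, ht, ht1⟩ := exists_valuation_mem_Ioo hp hnd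
  have htpos : 0 < Valued.v t := pos_of_gt ht
  obtain ⟨m, hlt, hle⟩ := exists_nat_pow_near_of_lt_one (Valued.v.pos_iff.2 hx) hx1 htpos ht1
  have hy : Valued.v (x / t ^ m) = Valued.v x / Valued.v t ^ m := by rw [map_div₀, _root_.map_pow]
  have hy1 : Valued.v (x / t ^ m) ≤ 1 := by
    rw [hy]
    exact div_le_one_of_le₀ hle zero_le
  have hyp : (p : ℝ≥0)⁻¹ < Valued.v (x / t ^ m) := by
    refine ht.trans ?_
    rwa [hy, lt_div_iff₀ (pow_pos htpos m), ← pow_succ']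
  obtain ⟨b, -, hNb⟩ := hN.exists_eq_valuation_of_lt hfrob ⟨x / t ^ m, hy1⟩ hyp
  obtain ⟨c, -, hNc⟩ := hN.exists_eq_valuation_of_lt hfrob ⟨t, ht1.le⟩ ht
  have hN_eq : N (b * c ^ m) = Valued.v x := by
    rw [hN.map_mul, hN.map_pow, hNb, hNc]
    change Valued.v (x / t ^ m) * Valued.v t ^ m = Valued.v x
    rw [← _root_.map_pow, ← Valued.v.map_mul,
      div_mul_cancel₀ x (pow_ne_zero m (Valued.v.ne_zero_iff.1 htpos.ne'))]
  refine ⟨b * c ^ m, mt hN.apply_eq_zero_iff.2 ?_, hN_eq⟩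
  rw [hN_eq]
  exact Valued.v.ne_zero_iff.2 hx

lemma exists_valuation_eq_div (hN : IsTiltNorm p K hp N) (hnd : ¬ IsDiscretelyValued K)
    (hfrob : ∀ a : OKmodp p K, ∃ b, b ^ p = a) {x : K} (hx : x ≠ 0) :
    ∃ a b : TiltRing p K hp, a ≠ 0 ∧ b ≠ 0 ∧ Valued.v x = N a / N b := by
  have h1 : (1 : TiltRing p K hp) ≠ 0 := mt hN.apply_eq_zero_iff.2 (hN.map_one ▸ one_ne_zero)
  rcases le_total (Valued.v x) 1 with hx1 | hx1
  · obtain ⟨a, ha, hNa⟩ := hN.exists_eq_valuation_of_le_one hnd hfrob hx hx1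
    exact ⟨a, 1, ha, h1, by rw [hN.map_one, div_one, hNa]⟩
  · obtain ⟨b, hb, hNb⟩ := hN.exists_eq_valuation_of_le_one hnd hfrob (inv_ne_zero hx)
      (by rw [map_inv₀]; exact inv_le_one_of_one_le₀ hx1)
    exact ⟨1, b, h1, hb, by rw [hN.map_one, hNb, map_inv₀, one_div, inv_inv]⟩

end IsTiltNorm

theorem perfectoid_norm_groups_eq_general (p : ℕ) [Fact p.Prime] (K : Type*) [Field K]
    [Valued K ℝ≥0]
    (hp : Valued.v (p : K) = (p : ℝ≥0)⁻¹)
    (hnd : ¬ IsDiscretelyValued K)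
    (hfrob : ∀ a : OKmodp p K, ∃ b, b ^ p = a)
    (N : TiltRing p K hp → ℝ≥0) (hN : IsTiltNorm p K hp N) :
    {r : ℝ≥0 | ∃ x : K, x ≠ 0 ∧ Valued.v x = r} =
      {r : ℝ≥0 | ∃ a b : TiltRing p K hp, a ≠ 0 ∧ b ≠ 0 ∧ r = N a / N b} := by
  ext r
  constructor
  · rintro ⟨x, hx, rfl⟩
    exact hN.exists_valuation_eq_div hnd hfrob hx
  · rintro ⟨a, b, ha, hb, rfl⟩
    obtain ⟨x, hx, hxa⟩ := hN.exists_valuation_eq ha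
    obtain ⟨y, hy, hyb⟩ := hN.exists_valuation_eq hb
    exact ⟨x / y, div_ne_zero hx hy, by rw [map_div₀, hxa, hyb]⟩

/-- For a perfectoid analytic field `K`, the norm groups of `K` and of its tilt `K'`
coincide: `|Kˣ| = |(K')ˣ|` (the latter being generated by the norms of nonzero elements
of `o_{K'}`, since `K'` is the fraction field of `o_{K'}`). -/
theorem perfectoid_norm_groups_eq (p : ℕ) [Fact p.Prime] (K : Type*) [Field K]
    [Valued K ℝ≥0] [CompleteSpace K]
    (hp : Valued.v (p : K) = (p : ℝ≥0)⁻¹)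
    (hnd : ¬ IsDiscretelyValued K)
    (hfrob : ∀ a : OKmodp p K, ∃ b, b ^ p = a)
    (N : TiltRing p K hp → ℝ≥0) (hN : IsTiltNorm p K hp N) :
    {r : ℝ≥0 | ∃ x : K, x ≠ 0 ∧ Valued.v x = r} =
      {r : ℝ≥0 | ∃ a b : TiltRing p K hp, a ≠ 0 ∧ b ≠ 0 ∧ r = N a / N b} :=
  perfectoid_norm_groups_eq_general p K hp hnd hfrob N hN
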